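/- Let Δ be a d-dimensional simplicial complex with a gradient vector field V, let (σ_0^{(k)}, τ_0^{(k−1)}) be a cancellable critical pair for some k ∈ {1,…,d}, and let W be the gradient vector field obtained by cancelling (σ_0, τ_0) from V. If τ_1, …, τ_m are the W-critical (k−1)-simplices (so that Crit_{k−1}^V(Δ) = {τ_0, τ_1, …, τ_m}), and β is any W-critical (k−2)-simplex with δ_{k−1}^V(β) = Σ_{i=0}^m b_i τ_i, then δ_{k−1}^W(β) = Σ_{i=1}^m b_i τ_i. -/
import Mathlib


open scoped Classical

/-- A finite abstract simplicial complex on a linearly ordered vertex type: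
a finite nonempty collection of finite subsets closed under taking subsets. -/
structure SComplex (V : Type*) [LinearOrder V] where
  faces : Finset (Finset V)
  nonempty' : faces.Nonempty
  downClosed : ∀ σ ∈ faces, ∀ τ ⊆ σ, τ ∈ faces

variable {V : Type*} [LinearOrder V]

/-- `Vf` is a discrete vector field on `Δ`: a collection of pairs `(α, β)` of simplices
with `α ⊊ β`, `dim β = dim α + 1`, such that each simplex is in at most one pair. -/
def IsDVF (Δ : SComplex V) (Vf : Finset (Finset V × Finset V)) : Prop :=
  (∀ p ∈ Vf, p.1 ∈ Δ.faces ∧ p.2 ∈ Δ.faces ∧ p.1 ⊂ p.2 ∧ p.2.card = p.1.card + 1) ∧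
    ∀ p ∈ Vf, ∀ q ∈ Vf, p ≠ q → p.1 ≠ q.1 ∧ p.1 ≠ q.2 ∧ p.2 ≠ q.1 ∧ p.2 ≠ q.2

/-- The incidence number `⟨σ, τ⟩`: it is `(-1)^i` if `τ = σ \ {x_i}` where
`x_0 < x_1 < …` are the vertices of `σ`, and `0` otherwise. -/
noncomputable def incidence (σ τ : Finset V) : ℤ :=
  if τ ⊆ σ ∧ (σ \ τ).card = 1 then
    (-1) ^ (σ.filter fun y => ∃ x ∈ σ \ τ, y < x).card
  else 0

/-- A `Vf`-trajectory `β₀, α₁, β₁, …, α_r, β_r` from the `q`-simplex `s` to the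
`q`-simplex `t`.  Here the field `α i` denotes `α_{i+1}` and `β i` denotes `β_i`
of the usual description. -/
structure Traj (Δ : SComplex V) (Vf : Finset (Finset V × Finset V)) (q : ℕ)
    (s t : Finset V) where
  r : ℕ
  β : Fin (r + 1) → Finset V
  α : Fin r → Finset V
  βmem : ∀ i, β i ∈ Δ.faces
  αmem : ∀ i, α i ∈ Δ.faces
  βcard : ∀ i, (β i).card = q + 1
  αcard : ∀ i, (α i).card = q
  first : β 0 = s
  last : β (Fin.last r) = t
  sub : ∀ i : Fin r, α i ⊂ β i.castSucc
  vpair : ∀ i : Fin r, (α i, β i.succ) ∈ Vf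
  αne : ∀ i : Fin r, ∀ h : (i : ℕ) + 1 < r, α ⟨(i : ℕ) + 1, h⟩ ≠ α i
  βne : ∀ i : Fin r, β i.succ ≠ β i.castSucc

/-- A `Vf`-trajectory `β₀, α₁, β₁, …, α_r, β_r, α_{r+1}` from the `q`-simplex `s`
to the `(q-1)`-simplex `t`.  Here `α i` denotes `α_{i+1}` and `β i` denotes `β_i`. -/
structure TrajD (Δ : SComplex V) (Vf : Finset (Finset V × Finset V)) (q : ℕ)
    (s t : Finset V) where
  r : ℕ
  β : Fin (r + 1) → Finset V
  α : Fin (r + 1) → Finset V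
  βmem : ∀ i, β i ∈ Δ.faces
  αmem : ∀ i, α i ∈ Δ.faces
  βcard : ∀ i, (β i).card = q + 1
  αcard : ∀ i, (α i).card = q
  first : β 0 = s
  last : α (Fin.last r) = t
  sub : ∀ i : Fin (r + 1), α i ⊂ β i
  vpair : ∀ i : Fin r, (α i.castSucc, β i.succ) ∈ Vf
  αne : ∀ i : Fin r, α i.succ ≠ α i.castSucc
  βne : ∀ i : Fin r, β i.succ ≠ β i.castSucc

/-- A co-`Vf`-trajectory `β₀, τ₁, β₁, …, τ_r, β_r` from the `q`-simplex `s` to the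
`q`-simplex `t`.  Here `γ i` denotes `τ_{i+1}` and `β i` denotes `β_i`. -/
structure CoTraj (Δ : SComplex V) (Vf : Finset (Finset V × Finset V)) (q : ℕ)
    (s t : Finset V) where
  r : ℕ
  β : Fin (r + 1) → Finset V
  γ : Fin r → Finset V
  βmem : ∀ i, β i ∈ Δ.faces
  γmem : ∀ i, γ i ∈ Δ.faces
  βcard : ∀ i, (β i).card = q + 1
  γcard : ∀ i, (γ i).card = q + 2
  first : β 0 = s
  last : β (Fin.last r) = t
  sub : ∀ i : Fin r, β i.castSucc ⊂ γ i
  vpair : ∀ i : Fin r, (β i.succ, γ i) ∈ Vf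
  βne : ∀ i : Fin r, β i.castSucc ≠ β i.succ

/-- A co-`Vf`-trajectory `β₀, τ₁, β₁, …, τ_r, β_r, τ_{r+1}` from the `(q-1)`-simplex `s`
to the `q`-simplex `t`.  Here `γ i` denotes `τ_{i+1}` and `β i` denotes `β_i`. -/
structure CoTrajU (Δ : SComplex V) (Vf : Finset (Finset V × Finset V)) (q : ℕ)
    (s t : Finset V) where
  r : ℕ
  β : Fin (r + 1) → Finset V
  γ : Fin (r + 1) → Finset V
  βmem : ∀ i, β i ∈ Δ.faces
  γmem : ∀ i, γ i ∈ Δ.faces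
  βcard : ∀ i, (β i).card = q
  γcard : ∀ i, (γ i).card = q + 1
  first : β 0 = s
  last : γ (Fin.last r) = t
  sub : ∀ i : Fin (r + 1), β i ⊂ γ i
  vpair : ∀ i : Fin r, (β i.succ, γ i.castSucc) ∈ Vf
  βne : ∀ i : Fin r, β i.castSucc ≠ β i.succ
  γne : ∀ i : Fin r, γ i.succ ≠ γ i.castSucc

/-- The weight `w(P) = ∏ (-⟨β_{i-1}, α_i⟩⟨β_i, α_i⟩)` of a trajectory between
`q`-simplices. -/
noncomputable def wT {Δ : SComplex V} {Vf : Finset (Finset V × Finset V)} {q : ℕ}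
    {s t : Finset V} (P : Traj Δ Vf q s t) : ℤ :=
  ∏ i : Fin P.r, -(incidence (P.β i.castSucc) (P.α i) * incidence (P.β i.succ) (P.α i))

/-- The weight `w(P) = (∏ (-⟨β_{i-1}, α_i⟩⟨β_i, α_i⟩)) ⬝ ⟨β_r, α_{r+1}⟩` of a trajectory
from a `q`-simplex to a `(q-1)`-simplex. -/
noncomputable def wTD {Δ : SComplex V} {Vf : Finset (Finset V × Finset V)} {q : ℕ}
    {s t : Finset V} (P : TrajD Δ Vf q s t) : ℤ :=
  (∏ i : Fin P.r,
      -(incidence (P.β i.castSucc) (P.α i.castSucc) *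
        incidence (P.β i.succ) (P.α i.castSucc))) *
    incidence (P.β (Fin.last P.r)) (P.α (Fin.last P.r))

/-- The weight `w(Q) = ∏ (-⟨τ_i, β_{i-1}⟩⟨τ_i, β_i⟩)` of a co-trajectory between
`q`-simplices. -/
noncomputable def wCT {Δ : SComplex V} {Vf : Finset (Finset V × Finset V)} {q : ℕ}
    {s t : Finset V} (Q : CoTraj Δ Vf q s t) : ℤ :=
  ∏ i : Fin Q.r, -(incidence (Q.γ i) (Q.β i.castSucc) * incidence (Q.γ i) (Q.β i.succ))

/-- The weight `w(Q) = (∏ (-⟨τ_i, β_{i-1}⟩⟨τ_i, β_i⟩)) ⬝ ⟨τ_{r+1}, β_r⟩` of a co-trajectory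
from a `(q-1)`-simplex to a `q`-simplex. -/
noncomputable def wCTU {Δ : SComplex V} {Vf : Finset (Finset V × Finset V)} {q : ℕ}
    {s t : Finset V} (Q : CoTrajU Δ Vf q s t) : ℤ :=
  (∏ i : Fin Q.r,
      -(incidence (Q.γ i.castSucc) (Q.β i.castSucc) *
        incidence (Q.γ i.castSucc) (Q.β i.succ))) *
    incidence (Q.γ (Fin.last Q.r)) (Q.β (Fin.last Q.r))

/-- A gradient vector field: a discrete vector field admitting no nontrivial closed
trajectory. -/
def IsGVF (Δ : SComplex V) (Vf : Finset (Finset V × Finset V)) : Prop :=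
  IsDVF Δ Vf ∧ ¬ ∃ (q : ℕ) (s : Finset V) (P : Traj Δ Vf q s s), 0 < P.r

/-- `σ` is a critical simplex of `Δ` with respect to `Vf`: a nonempty simplex that either
belongs to no pair of `Vf`, or is a `0`-simplex paired with the empty simplex. -/
def IsCrit (Δ : SComplex V) (Vf : Finset (Finset V × Finset V)) (σ : Finset V) : Prop :=
  σ ∈ Δ.faces ∧ σ.Nonempty ∧
    ((∀ p ∈ Vf, σ ≠ p.1 ∧ σ ≠ p.2) ∨ (σ.card = 1 ∧ (∅, σ) ∈ Vf))

/-- The set of critical simplices of cardinality `c` (i.e. of dimension `c - 1`);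
so `Crit_q = critC Δ Vf (q + 1)`. -/
noncomputable def critC (Δ : SComplex V) (Vf : Finset (Finset V × Finset V)) (c : ℕ) :
    Finset (Finset V) :=
  Δ.faces.filter fun σ => σ.card = c ∧ IsCrit Δ Vf σ

/-- The coefficient of the `(q-1)`-simplex `τ` in `∂_q σ`: the sum of the weights of all
trajectories from `σ` to `τ`. -/
noncomputable def bCoeff (Δ : SComplex V) (Vf : Finset (Finset V × Finset V)) (q : ℕ)
    (σ τ : Finset V) : ℤ :=
  ∑ᶠ P : TrajD Δ Vf q σ τ, wTD P

/-- The `q`-th Morse boundary operator `∂_q`, as an endomorphism of the free abelian group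
on all simplices; it sends a critical `q`-simplex `σ` to
`∑_{τ ∈ Crit_{q-1}} (∑_{P : σ ⇝ τ} w(P)) ⬝ τ` and non-critical generators to `0`. -/
noncomputable def morseBoundary (Δ : SComplex V) (Vf : Finset (Finset V × Finset V))
    (q : ℕ) : (Finset V →₀ ℤ) →ₗ[ℤ] (Finset V →₀ ℤ) :=
  Finsupp.lsum ℤ fun σ => LinearMap.toSpanSingleton ℤ (Finset V →₀ ℤ)
    (if σ ∈ critC Δ Vf (q + 1) then
      ∑ τ ∈ critC Δ Vf q, bCoeff Δ Vf q σ τ • Finsupp.single τ (1 : ℤ)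
    else 0)

/-- The coefficient of the `q`-simplex `τ` in `δ_q σ`: the sum of the weights of all
co-trajectories from `σ` to `τ`. -/
noncomputable def cbCoeff (Δ : SComplex V) (Vf : Finset (Finset V × Finset V)) (q : ℕ)
    (σ τ : Finset V) : ℤ :=
  ∑ᶠ Q : CoTrajU Δ Vf q σ τ, wCTU Q

/-- The `q`-th Morse coboundary operator `δ_q`, as an endomorphism of the free abelian
group on all simplices; it sends a critical `(q-1)`-simplex `σ` to
`∑_{τ ∈ Crit_q} (∑_{Q : σ ⇝ τ} w(Q)) ⬝ τ` and non-critical generators to `0`. -/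
noncomputable def morseCoboundary (Δ : SComplex V) (Vf : Finset (Finset V × Finset V))
    (q : ℕ) : (Finset V →₀ ℤ) →ₗ[ℤ] (Finset V →₀ ℤ) :=
  Finsupp.lsum ℤ fun σ => LinearMap.toSpanSingleton ℤ (Finset V →₀ ℤ)
    (if σ ∈ critC Δ Vf q then
      ∑ τ ∈ critC Δ Vf (q + 1), cbCoeff Δ Vf q σ τ • Finsupp.single τ (1 : ℤ)
    else 0)

/-- The vector field `W = (V \ {(α_i, β_i) : 1 ≤ i ≤ r}) ∪ {(α_{i+1}, β_i) : 0 ≤ i ≤ r}`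
obtained by cancelling a pair of critical simplices along the trajectory `P0`. -/
noncomputable def cancelPair {Δ : SComplex V} {Vf : Finset (Finset V × Finset V)} {k : ℕ}
    {σ0 τ0 : Finset V} (P0 : TrajD Δ Vf k σ0 τ0) : Finset (Finset V × Finset V) :=
  (Vf \ Finset.image (fun i : Fin P0.r => (P0.α i.castSucc, P0.β i.succ)) Finset.univ) ∪
    Finset.image (fun i : Fin (P0.r + 1) => (P0.α i, P0.β i)) Finset.univ

/-- The set of simplices appearing in a trajectory. -/
noncomputable def TrajD.simps {Δ : SComplex V} {Vf : Finset (Finset V × Finset V)} {q : ℕ}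
    {s t : Finset V} (P : TrajD Δ Vf q s t) : Finset (Finset V) :=
  Finset.image P.β Finset.univ ∪ Finset.image P.α Finset.univ

/-- The set of simplices appearing in a trajectory. -/
noncomputable def Traj.simps {Δ : SComplex V} {Vf : Finset (Finset V × Finset V)} {q : ℕ}
    {s t : Finset V} (P : Traj Δ Vf q s t) : Finset (Finset V) :=
  Finset.image P.β Finset.univ ∪ Finset.image P.α Finset.univ

/-- The underlying sequence `β₀, α₁, β₁, …, α_r, β_r, α_{r+1}` of a trajectory. -/
noncomputable def TrajD.seq {Δ : SComplex V} {Vf : Finset (Finset V × Finset V)} {q : ℕ}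
    {s t : Finset V} (P : TrajD Δ Vf q s t) : List (Finset V) :=
  (List.ofFn fun i : Fin (P.r + 1) => [P.β i, P.α i]).flatten

/-- The underlying sequence `β₀, α₁, β₁, …, α_r, β_r` of a trajectory. -/
noncomputable def Traj.seq {Δ : SComplex V} {Vf : Finset (Finset V × Finset V)} {q : ℕ}
    {s t : Finset V} (P : Traj Δ Vf q s t) : List (Finset V) :=
  ((List.ofFn fun i : Fin P.r => [P.β i.castSucc, P.α i]).flatten) ++ [P.β (Fin.last P.r)]

/-- The underlying sequence `β₀, τ₁, β₁, …, β_r, τ_{r+1}` of a co-trajectory. -/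
noncomputable def CoTrajU.seq {Δ : SComplex V} {Vf : Finset (Finset V × Finset V)} {q : ℕ}
    {s t : Finset V} (Q : CoTrajU Δ Vf q s t) : List (Finset V) :=
  (List.ofFn fun i : Fin (Q.r + 1) => [Q.β i, Q.γ i]).flatten

section Aux

variable {Δ : SComplex V} {Vf : Finset (Finset V × Finset V)} {k : ℕ}
  {σ0 τ0 : Finset V}

/-- Membership in `cancelPair P0` agrees with membership in `Vf` for pairs whose first
component does not have cardinality `k`. -/
lemma mem_cancelPair_iff (P0 : TrajD Δ Vf k σ0 τ0) {p : Finset V × Finset V}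
    (hp : p.1.card ≠ k) : p ∈ cancelPair P0 ↔ p ∈ Vf := by
  unfold cancelPair
  simp only [Finset.mem_union, Finset.mem_sdiff, Finset.mem_image, Finset.mem_univ,
    true_and]
  constructor
  · rintro (⟨h, -⟩ | ⟨i, rfl⟩)
    · exact h
    · exact absurd (P0.αcard i) hp
  · intro h
    refine Or.inl ⟨h, ?_⟩
    rintro ⟨i, rfl⟩
    exact hp (P0.αcard i.castSucc)

/-- Criticality agrees for simplices of cardinality `k - 1` (with `1 ≤ k`). -/
lemma isCrit_cancelPair_iff (P0 : TrajD Δ Vf k σ0 τ0) (hk : 1 ≤ k) {σ : Finset V}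
    (hσ : σ.card = k - 1) : IsCrit Δ (cancelPair P0) σ ↔ IsCrit Δ Vf σ := by
  have hcard : ∀ i : Fin (P0.r + 1), σ ≠ P0.α i ∧ σ ≠ P0.β i := by
    intro i
    constructor
    · intro h; have := P0.αcard i; rw [← h, hσ] at this; omega
    · intro h; have := P0.βcard i; rw [← h, hσ] at this; omega
  unfold IsCrit
  refine and_congr_right fun _ => and_congr_right fun _ => or_congr ?_ ?_
  · constructor
    · intro h p hpV
      by_cases hpW : p ∈ cancelPair P0
      · exact h p hpW
      · -- p ∈ Vf \ W means p is one of the removed pairs (α_i, β_{i+1})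
        have : ∃ i : Fin P0.r, (P0.α i.castSucc, P0.β i.succ) = p := by
          by_contra hc
          push_neg at hc
          apply hpW
          unfold cancelPair
          simp only [Finset.mem_union, Finset.mem_sdiff, Finset.mem_image, Finset.mem_univ,
            true_and]
          exact Or.inl ⟨hpV, fun ⟨i, hi⟩ => hc i hi⟩
        obtain ⟨i, rfl⟩ := this
        exact ⟨(hcard i.castSucc).1, (hcard i.succ).2⟩
    · intro h p hpW
      by_cases hpV : p ∈ Vf
      · exact h p hpV
      · -- p ∈ W \ Vf means p is one of the added pairs (α_i, β_i)
        have : ∃ i : Fin (P0.r + 1), (P0.α i, P0.β i) = p := by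
          unfold cancelPair at hpW
          simp only [Finset.mem_union, Finset.mem_sdiff, Finset.mem_image, Finset.mem_univ,
            true_and] at hpW
          rcases hpW with ⟨h1, -⟩ | h2
          · exact absurd h1 hpV
          · exact h2
        obtain ⟨i, rfl⟩ := this
        exact ⟨(hcard i).1, (hcard i).2⟩
  · refine and_congr_right fun _ => ?_
    exact mem_cancelPair_iff P0 (by simp; omega)

/-- The co-trajectories of `Vf` and of `cancelPair P0` in degree `k - 1` coincide. -/
noncomputable def coTrajEquiv (P0 : TrajD Δ Vf k σ0 τ0) (hk : 1 ≤ k) (s t : Finset V) :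
    CoTrajU Δ (cancelPair P0) (k - 1) s t ≃ CoTrajU Δ Vf (k - 1) s t where
  toFun Q := ⟨Q.r, Q.β, Q.γ, Q.βmem, Q.γmem, Q.βcard, Q.γcard, Q.first, Q.last, Q.sub,
    fun i => (mem_cancelPair_iff P0 (by simp [Q.βcard i.succ]; omega)).mp (Q.vpair i),
    Q.βne, Q.γne⟩
  invFun Q := ⟨Q.r, Q.β, Q.γ, Q.βmem, Q.γmem, Q.βcard, Q.γcard, Q.first, Q.last, Q.sub,
    fun i => (mem_cancelPair_iff P0 (by simp [Q.βcard i.succ]; omega)).mpr (Q.vpair i),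
    Q.βne, Q.γne⟩
  left_inv Q := rfl
  right_inv Q := rfl

lemma cbCoeff_cancelPair (P0 : TrajD Δ Vf k σ0 τ0) (hk : 1 ≤ k) (s t : Finset V) :
    cbCoeff Δ (cancelPair P0) (k - 1) s t = cbCoeff Δ Vf (k - 1) s t :=
  finsum_eq_of_bijective (coTrajEquiv P0 hk s t) (coTrajEquiv P0 hk s t).bijective
    fun _ => rfl

lemma morseCoboundary_single (Δ : SComplex V) (Vf' : Finset (Finset V × Finset V))
    (q : ℕ) (β : Finset V) :
    morseCoboundary Δ Vf' q (Finsupp.single β 1) =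
      if β ∈ critC Δ Vf' q then
        ∑ t ∈ critC Δ Vf' (q + 1), cbCoeff Δ Vf' q β t • Finsupp.single t (1 : ℤ)
      else 0 := by
  simp [morseCoboundary, Finsupp.lsum_apply, Finsupp.sum_single_index]

end Aux

/-- If δ_{k-1}^V β = Σ_{i=0}^m b_i τ_i then δ_{k-1}^W β = Σ_{i=1}^m b_i τ_i. -/
theorem statement_10 (Δ : SComplex V) (d k : ℕ)
    (hdim : ∀ σ ∈ Δ.faces, σ.card ≤ d + 1) (hdim' : ∃ σ ∈ Δ.faces, σ.card = d + 1)
    (hk1 : 1 ≤ k) (hkd : k ≤ d)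
    (Vf : Finset (Finset V × Finset V)) (hV : IsGVF Δ Vf)
    (σ0 τ0 : Finset V) (hσ0 : σ0 ∈ critC Δ Vf (k + 1)) (hτ0 : τ0 ∈ critC Δ Vf k)
    (P0 : TrajD Δ Vf k σ0 τ0) (hP0uniq : ∀ Q : TrajD Δ Vf k σ0 τ0, Q = P0)
    (m : ℕ) (τ : Fin (m + 1) → Finset V) (hτinj : Function.Injective τ)
    (hτzero : τ 0 = τ0)
    (hcritV : critC Δ Vf k = Finset.image τ Finset.univ)
    (hcritW : critC Δ (cancelPair P0) k =
      Finset.image (fun i : Fin m => τ i.succ) Finset.univ)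
    (β : Finset V) (hβ : β ∈ critC Δ (cancelPair P0) (k - 1))
    (b : Fin (m + 1) → ℤ)
    (hb : morseCoboundary Δ Vf (k - 1) (Finsupp.single β 1) =
      ∑ i : Fin (m + 1), b i • Finsupp.single (τ i) (1 : ℤ)) :
    morseCoboundary Δ (cancelPair P0) (k - 1) (Finsupp.single β 1) =
      ∑ i : Fin m, b i.succ • Finsupp.single (τ i.succ) (1 : ℤ) := by
  have hq : k - 1 + 1 = k := Nat.succ_pred_eq_of_pos hk1
  have hβV : β ∈ critC Δ Vf (k - 1) := by
    simp only [critC, Finset.mem_filter] at hβ ⊢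
    exact ⟨hβ.1, hβ.2.1, (isCrit_cancelPair_iff P0 hk1 hβ.2.1).mp hβ.2.2⟩
  have hτsucc_inj : Function.Injective fun i : Fin m => τ i.succ :=
    fun a b h => Fin.succ_injective _ (hτinj h)
  rw [morseCoboundary_single, if_pos hβV, hq, hcritV,
    Finset.sum_image (fun x _ y _ h => hτinj h)] at hb
  have hco : ∀ j : Fin (m + 1), cbCoeff Δ Vf (k - 1) β (τ j) = b j := by
    intro j
    have h2 := congrArg (fun f => f (τ j)) hb
    simp only [Finsupp.coe_finset_sum, Finset.sum_apply, Finsupp.smul_apply,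
      Finsupp.single_apply, hτinj.eq_iff, smul_eq_mul, mul_ite, mul_one, mul_zero,
      Finset.sum_ite_eq', Finset.mem_univ, if_true] at h2
    exact h2
  rw [morseCoboundary_single, if_pos hβ, hq, hcritW,
    Finset.sum_image (fun x _ y _ h => hτsucc_inj h)]
  refine Finset.sum_congr rfl fun i _ => ?_
  rw [cbCoeff_cancelPair P0 hk1, hco i.succ]
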